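/- arXiv:2409.04438 — 3 statements merged into one kernel-verified Lean document; each statement's English description precedes it below -/
import Mathlib

section
/- The polynomial z^6 + 35z^4 − 294z^2 + 91 is irreducible over ℚ and has exactly four real roots and one pair of complex conjugate non-real roots. -/
open Polynomial Complex

noncomputable def pZ : ℤ[X] := X ^ 6 + C 35 * X ^ 4 - C 294 * X ^ 2 + C 91

lemma pZ_monic : pZ.Monic := by
  unfold pZ; monicity!

lemma pZ_natDegree : pZ.natDegree = 6 := by
  unfold pZ; compute_degree!

lemma pZ_irred : Irreducible pZ := by
  have hE : pZ.IsEisensteinAt (Ideal.span {(7 : ℤ)}) := by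
    constructor
    · rw [pZ_monic.leadingCoeff, Ideal.mem_span_singleton]
      decide
    · intro n hn
      rw [pZ_natDegree] at hn
      rw [Ideal.mem_span_singleton]
      unfold pZ
      interval_cases n <;>
        simp [coeff_add, coeff_sub, coeff_C_mul, coeff_X_pow, coeff_C] <;> decide
    · rw [Ideal.span_singleton_pow, Ideal.mem_span_singleton]
      unfold pZ
      simp [coeff_add, coeff_sub, coeff_C_mul, coeff_X_pow, coeff_C]
  exact hE.irreducible (Ideal.span_singleton_prime (by norm_num) |>.mpr (by norm_num))
    pZ_monic.isPrimitive (by rw [pZ_natDegree]; norm_num)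

lemma pQ_irred : Irreducible (X ^ 6 + 35 * X ^ 4 - 294 * X ^ 2 + 91 : ℚ[X]) := by
  have h := (IsPrimitive.Int.irreducible_iff_irreducible_map_cast pZ_monic.isPrimitive).mp pZ_irred
  have : pZ.map (Int.castRingHom ℚ) = X ^ 6 + 35 * X ^ 4 - 294 * X ^ 2 + 91 := by
    unfold pZ
    simp [Polynomial.map_add, Polynomial.map_sub, Polynomial.map_mul, Polynomial.map_pow,
      map_C, map_X]
  rwa [this] at h

noncomputable def f3 : ℝ → ℝ := fun t => t ^ 3 + 35 * t ^ 2 - 294 * t + 91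

lemma f3_cont : Continuous f3 := by unfold f3; continuity

lemma root_in (a b : ℝ) (hab : a ≤ b) (h : (0:ℝ) ∈ Set.Ioo (f3 a) (f3 b) ∪ Set.Ioo (f3 b) (f3 a)) :
    ∃ r ∈ Set.Ioo a b, f3 r = 0 := by
  rcases h with h | h
  · obtain ⟨r, hr, hr0⟩ := intermediate_value_Ioo hab (f3_cont.continuousOn) h
    exact ⟨r, hr, hr0⟩
  · obtain ⟨r, hr, hr0⟩ := intermediate_value_Ioo' hab (f3_cont.continuousOn) h
    exact ⟨r, hr, hr0⟩

lemma three_roots : ∃ r1 r2 r3 : ℝ,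
    r1 < 0 ∧ 0 < r2 ∧ r2 < r3 ∧ f3 r1 = 0 ∧ f3 r2 = 0 ∧ f3 r3 = 0 := by
  obtain ⟨r1, h1m, h10⟩ := root_in (-43) (-42) (by norm_num)
    (Or.inl (by constructor <;> (unfold f3; norm_num)))
  obtain ⟨r2, h2m, h20⟩ := root_in 0 1 (by norm_num)
    (Or.inr (by constructor <;> (unfold f3; norm_num)))
  obtain ⟨r3, h3m, h30⟩ := root_in 3 7 (by norm_num)
    (Or.inl (by constructor <;> (unfold f3; norm_num)))
  exact ⟨r1, r2, r3, by linarith [h1m.2], h2m.1, by linarith [h2m.2, h3m.1], h10, h20, h30⟩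

lemma vieta {r1 r2 r3 : ℝ} (h1 : f3 r1 = 0) (h2 : f3 r2 = 0) (h3 : f3 r3 = 0)
    (h12 : r1 ≠ r2) (h13 : r1 ≠ r3) (h23 : r2 ≠ r3) :
    r1 + r2 + r3 = -35 ∧ r1*r2 + r1*r3 + r2*r3 = -294 ∧ r1*r2*r3 = -91 := by
  unfold f3 at h1 h2 h3
  have g12 : r1^2 + r1*r2 + r2^2 + 35*r1 + 35*r2 - 294 = 0 := by
    apply mul_left_cancel₀ (sub_ne_zero.mpr h12)
    linear_combination h1 - h2
  have g13 : r1^2 + r1*r3 + r3^2 + 35*r1 + 35*r3 - 294 = 0 := by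
    apply mul_left_cancel₀ (sub_ne_zero.mpr h13)
    linear_combination h1 - h3
  have e1 : r1 + r2 + r3 = -35 := by
    apply mul_left_cancel₀ (sub_ne_zero.mpr h23)
    linear_combination g12 - g13
  have e2 : r1*r2 + r1*r3 + r2*r3 = -294 := by
    linear_combination -g12 + (r1 + r2) * e1
  have e3 : r1*r2*r3 = -91 := by
    linear_combination h3 + r3 * e2 - r3^2 * e1
  exact ⟨e1, e2, e3⟩

lemma quad_factor (u : ℂ) : (X - C u) * (X - C (-u)) = X ^ 2 - C (u ^ 2) := by
  rw [C_neg, map_pow]; ring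

lemma cubic_prod (c1 c2 c3 : ℂ) (h1 : c1 + c2 + c3 = -35)
    (h2 : c1*c2 + c1*c3 + c2*c3 = -294) (h3 : c1*c2*c3 = -91) :
    (X ^ 2 - C c1) * (X ^ 2 - C c2) * (X ^ 2 - C c3)
      = X ^ 6 + 35 * X ^ 4 - 294 * X ^ 2 + 91 := by
  have key : (X ^ 2 - C c1) * (X ^ 2 - C c2) * (X ^ 2 - C c3)
      = X ^ 6 - C (c1 + c2 + c3) * X ^ 4 + C (c1*c2 + c1*c3 + c2*c3) * X ^ 2
        - C (c1*c2*c3) := by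
    simp only [map_add, map_mul]
    ring
  rw [key, h1, h2, h3]
  simp only [map_neg, map_ofNat]
  ring

open scoped Classical in
/-- The polynomial `z^6 + 35 z^4 - 294 z^2 + 91` is irreducible over `ℚ` and has
exactly four real roots and one pair of complex conjugate non-real roots. -/
theorem stmt9 :
    Irreducible (X ^ 6 + 35 * X ^ 4 - 294 * X ^ 2 + 91 : ℚ[X]) ∧
    ((X ^ 6 + 35 * X ^ 4 - 294 * X ^ 2 + 91 : ℂ[X]).roots.filter
      (fun z => z.im = 0)).card = 4 ∧
    ∃ z : ℂ, z.im ≠ 0 ∧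
      (X ^ 6 + 35 * X ^ 4 - 294 * X ^ 2 + 91 : ℂ[X]).roots.filter (fun w => w.im ≠ 0) =
        {z, (starRingEnd ℂ) z} := by
  obtain ⟨r1, r2, r3, hr1, hr2, hr23, h10, h20, h30⟩ := three_roots
  obtain ⟨e1, e2, e3⟩ := vieta h10 h20 h30
    (by linarith) (by linarith) (ne_of_lt hr23)
  set sa := Real.sqrt r2 with hsa
  set sb := Real.sqrt r3 with hsb
  set sc := Real.sqrt (-r1) with hsc
  set v : ℂ := (sc : ℂ) * I with hv
  have h1 : ((sa : ℂ)) ^ 2 = (r2 : ℂ) := by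
    rw [← ofReal_pow, Real.sq_sqrt hr2.le]
  have h2 : ((sb : ℂ)) ^ 2 = (r3 : ℂ) := by
    rw [← ofReal_pow, Real.sq_sqrt (by linarith : (0:ℝ) ≤ r3)]
  have hv2 : v ^ 2 = (r1 : ℂ) := by
    rw [hv, mul_pow, I_sq, ← ofReal_pow, Real.sq_sqrt (by linarith : (0:ℝ) ≤ -r1)]
    push_cast; ring
  have hscpos : 0 < sc := Real.sqrt_pos.mpr (by linarith)
  set S : Multiset ℂ := {(sa : ℂ), -(sa : ℂ), (sb : ℂ), -(sb : ℂ), v, -v} with hS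
  have hfact : (X ^ 6 + 35 * X ^ 4 - 294 * X ^ 2 + 91 : ℂ[X])
      = (S.map fun a => X - C a).prod := by
    rw [hS]
    simp only [Multiset.insert_eq_cons, Multiset.map_cons, Multiset.map_singleton,
      Multiset.prod_cons, Multiset.prod_singleton]
    rw [show ((X : ℂ[X]) - C (sa : ℂ)) * ((X - C (-(sa : ℂ))) * ((X - C (sb : ℂ)) *
          ((X - C (-(sb : ℂ))) * ((X - C v) * (X - C (-v))))))
        = ((X - C (sa:ℂ)) * (X - C (-(sa:ℂ)))) * ((X - C (sb:ℂ)) * (X - C (-(sb:ℂ))))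
          * ((X - C v) * (X - C (-v))) from by ring]
    rw [quad_factor, quad_factor, quad_factor, h1, h2, hv2]
    rw [cubic_prod (r2:ℂ) (r3:ℂ) (r1:ℂ)
      (by have : r2 + r3 + r1 = -35 := by linarith
          exact_mod_cast this)
      (by have : r2*r3 + r2*r1 + r3*r1 = -294 := by linear_combination e2
          exact_mod_cast this)
      (by have : r2*r3*r1 = -91 := by linear_combination e3
          exact_mod_cast this)]
  have hroots : (X ^ 6 + 35 * X ^ 4 - 294 * X ^ 2 + 91 : ℂ[X]).roots = S := by
    rw [hfact, roots_multiset_prod_X_sub_C]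
  have hvim : v.im = sc := by simp [hv]
  refine ⟨pQ_irred, ?_, ?_⟩
  · rw [hroots, hS]
    rw [Multiset.insert_eq_cons]
    simp [Multiset.filter_cons, Multiset.filter_singleton, hvim, hscpos.ne']
  · refine ⟨v, by rw [hvim]; exact ne_of_gt hscpos, ?_⟩
    have hconj : (starRingEnd ℂ) v = -v := by
      rw [hv]; simp
    rw [hroots, hS, hconj]
    rw [Multiset.insert_eq_cons]
    simp [Multiset.filter_cons, Multiset.filter_singleton, hvim, hscpos.ne']
end

section
/- The polynomial z^8 + 82z^6 − 1101z^4 + 1458z^2 − 79 has exactly six real roots and exactly one pair of complex conjugate non-real roots. -/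
open Polynomial Complex

open scoped Classical in
/-- The polynomial `z^8 + 82 z^6 - 1101 z^4 + 1458 z^2 - 79` has exactly six real roots
and exactly one pair of complex conjugate non-real roots. -/
theorem stmt10 :
    ((X ^ 8 + 82 * X ^ 6 - 1101 * X ^ 4 + 1458 * X ^ 2 - 79 : ℂ[X]).roots.filter
      (fun z => z.im = 0)).card = 6 ∧
    ∃ z : ℂ, z.im ≠ 0 ∧
      (X ^ 8 + 82 * X ^ 6 - 1101 * X ^ 4 + 1458 * X ^ 2 - 79 : ℂ[X]).roots.filter
        (fun w => w.im ≠ 0) = {z, (starRingEnd ℂ) z} := by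
  set P : ℂ[X] := X ^ 8 + 82 * X ^ 6 - 1101 * X ^ 4 + 1458 * X ^ 2 - 79 with hPdef
  -- basic facts about P
  have hP0 : P ≠ 0 := by
    intro h
    have h0 : P.eval 0 = 0 := by rw [h]; simp
    simp [hPdef] at h0
  have hdeg : P.natDegree = 8 := by rw [hPdef]; compute_degree!
  have hcard : P.roots.card = 8 := by
    have := (Polynomial.splits_iff_card_roots.mp (IsAlgClosed.splits P))
    rw [this, hdeg]
  -- real roots via IVT
  set f : ℝ → ℝ := fun x => x^8 + 82*x^6 - 1101*x^4 + 1458*x^2 - 79 with hfdef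
  have hfc : Continuous f := by rw [hfdef]; fun_prop
  have hrootR : ∀ x : ℝ, f x = 0 → ((x:ℂ) ∈ P.roots) := by
    intro x hx
    refine Polynomial.mem_roots'.mpr ⟨hP0, ?_⟩
    simp only [hPdef, IsRoot, eval_sub, eval_add, eval_mul, eval_pow, eval_X, eval_ofNat]
    simp only [hfdef] at hx
    have h2 := congrArg (fun r : ℝ => (r : ℂ)) hx; push_cast at h2; linear_combination h2
  have hfeven : ∀ x : ℝ, f (-x) = f x := by intro x; simp [hfdef]; ring
  obtain ⟨a, ha, hfa⟩ := intermediate_value_Ioo (by norm_num : (0:ℝ) ≤ 3/10)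
    (hfc.continuousOn)
    (by constructor <;> norm_num [hfdef] : (0:ℝ) ∈ Set.Ioo (f 0) (f (3/10)))
  obtain ⟨b, hb, hfb⟩ := intermediate_value_Ioo' (by norm_num : (3/10:ℝ) ≤ 6/5)
    (hfc.continuousOn)
    (by constructor <;> norm_num [hfdef] : (0:ℝ) ∈ Set.Ioo (f (6/5)) (f (3/10)))
  obtain ⟨c, hc, hfc'⟩ := intermediate_value_Ioo (by norm_num : (6/5:ℝ) ≤ 33/10)
    (hfc.continuousOn)
    (by constructor <;> norm_num [hfdef] : (0:ℝ) ∈ Set.Ioo (f (6/5)) (f (33/10)))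
  obtain ⟨ha1, ha2⟩ := ha
  obtain ⟨hb1, hb2⟩ := hb
  obtain ⟨hc1, hc2⟩ := hc
  -- the purely imaginary root via IVT
  set g : ℝ → ℝ := fun y => y^8 - 82*y^6 - 1101*y^4 - 1458*y^2 - 79 with hgdef
  have hgc : Continuous g := by rw [hgdef]; fun_prop
  obtain ⟨y, hy, hgy⟩ := intermediate_value_Ioo (by norm_num : (9:ℝ) ≤ 10)
    (hgc.continuousOn)
    (by constructor <;> norm_num [hgdef] : (0:ℝ) ∈ Set.Ioo (g 9) (g 10))
  have hy9 : (9:ℝ) < y := hy.1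
  set z : ℂ := (y:ℂ) * I with hzdef
  have hzim : z.im = y := by simp [hzdef]
  have hzim0 : z.im ≠ 0 := by rw [hzim]; linarith
  have hconj : (starRingEnd ℂ) z = -z := by simp [hzdef, Complex.ext_iff]
  have hy' : (y:ℂ)^8 - 82*(y:ℂ)^6 - 1101*(y:ℂ)^4 - 1458*(y:ℂ)^2 - 79 = 0 := by
    have := hgy; simp only [hgdef] at this; exact_mod_cast this
  have hz2 : z^2 = -((y:ℂ)^2) := by rw [hzdef, mul_pow, Complex.I_sq]; ring
  have key : ∀ w : ℂ, w^2 = -((y:ℂ)^2) → w ∈ P.roots := by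
    intro w hw
    refine Polynomial.mem_roots'.mpr ⟨hP0, ?_⟩
    simp only [hPdef, IsRoot, eval_sub, eval_add, eval_mul, eval_pow, eval_X, eval_ofNat]
    have e : w^8 + 82*w^6 - 1101*w^4 + 1458*w^2 - 79
        = (w^2)^4 + 82*(w^2)^3 - 1101*(w^2)^2 + 1458*(w^2) - 79 := by ring
    rw [e, hw]; linear_combination hy'
  have hzroot : z ∈ P.roots := key z hz2
  have hzroot' : -z ∈ P.roots := key (-z) (by rw [neg_sq]; exact hz2)
  -- counting
  set s1 := P.roots.filter (fun z => z.im = 0) with hs1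
  set s2 := P.roots.filter (fun w => w.im ≠ 0) with hs2
  have hsum : s1.card + s2.card = 8 := by
    rw [hs1, hs2, ← Multiset.card_add, Multiset.filter_add_not, hcard]
  have h6 : 6 ≤ s1.card := by
    have hmem : ∀ x : ℝ, f x = 0 → (x:ℂ) ∈ s1 := by
      intro x hx
      rw [hs1, Multiset.mem_filter]
      exact ⟨hrootR x hx, by simp⟩
    have hsub : ({(a:ℂ), (b:ℂ), (c:ℂ), ((-a:ℝ):ℂ), ((-b:ℝ):ℂ), ((-c:ℝ):ℂ)} : Multiset ℂ) ≤ s1 := by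
      rw [Multiset.le_iff_subset]
      · intro x hx
        simp only [Multiset.insert_eq_cons, Multiset.mem_cons, Multiset.mem_singleton] at hx
        rcases hx with h|h|h|h|h|h <;> subst h <;>
          first
          | exact hmem _ (by assumption)
          | exact hmem _ (by rw [hfeven]; assumption)
      · simp only [Multiset.insert_eq_cons, Multiset.nodup_cons, Multiset.mem_cons,
          Multiset.mem_singleton, Multiset.nodup_singleton, Complex.ofReal_inj, not_or]
        norm_num
        refine ⟨⟨?_,?_,?_,?_,?_⟩,⟨?_,?_,?_,?_⟩,⟨?_,?_,?_⟩,⟨?_,?_⟩,?_⟩ <;> intro h <;> linarith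
    have := Multiset.card_le_card hsub
    simpa using this
  have hzmem : z ∈ s2 := by rw [hs2, Multiset.mem_filter]; exact ⟨hzroot, hzim0⟩
  have hzmem' : (starRingEnd ℂ) z ∈ s2 := by
    rw [hs2, Multiset.mem_filter, hconj]
    refine ⟨hzroot', ?_⟩
    simp only [Complex.neg_im, ne_eq, neg_eq_zero]
    exact hzim0
  have hne : z ≠ (starRingEnd ℂ) z := by
    rw [hconj]
    intro h
    have : z.im = (-z).im := by rw [← h]
    simp only [Complex.neg_im] at this
    exact hzim0 (by linarith)
  have hsub2 : ({z, (starRingEnd ℂ) z} : Multiset ℂ) ≤ s2 := by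
    rw [Multiset.le_iff_subset]
    · intro x hx
      simp only [Multiset.insert_eq_cons, Multiset.mem_cons, Multiset.mem_singleton] at hx
      rcases hx with h|h <;> subst h <;> assumption
    · simp [hne]
  have h2 : 2 ≤ s2.card := by
    have := Multiset.card_le_card hsub2
    simpa using this
  have hs1card : s1.card = 6 := by omega
  have hs2card : s2.card = 2 := by omega
  refine ⟨hs1card, z, hzim0, ?_⟩
  exact (Multiset.eq_of_le_of_card_le hsub2 (by rw [hs2card]; simp)).symm
end

section
/- The degree-8 polynomial z^8 + 212z^6 − 4234z^4 + 19060z^2 − 47 is irreducible over ℚ. -/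
open Polynomial

namespace Stmt18Aux

instance : Fact (Nat.Prime 7) := ⟨by norm_num⟩

noncomputable def Fz : ℤ[X] := X ^ 8 + C 212 * X ^ 6 - C 4234 * X ^ 4 + C 19060 * X ^ 2 - C 47
noncomputable def C7 : (ZMod 7)[X] := X ^ 4 + C 3 * X ^ 2 + C 5
noncomputable def D7 : (ZMod 7)[X] := X ^ 4 + C 6 * X ^ 2 + C 6

lemma Fz_monic : Fz.Monic := by unfold Fz; monicity!

lemma Fz_natDegree : Fz.natDegree = 8 := by unfold Fz; compute_degree!

lemma Fz_coeff_zero : Fz.coeff 0 = -47 := by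
  unfold Fz; simp [coeff_X_pow, coeff_C]

lemma Fz_comp_neg : Fz.comp (-X) = Fz := by
  unfold Fz
  simp only [add_comp, sub_comp, mul_comp, pow_comp, X_comp, C_comp]
  ring

lemma C7_monic : C7.Monic := by unfold C7; monicity!
lemma D7_monic : D7.Monic := by unfold D7; monicity!
lemma C7_natDegree : C7.natDegree = 4 := by unfold C7; compute_degree!
lemma D7_natDegree : D7.natDegree = 4 := by unfold D7; compute_degree!

lemma C7_ne_D7 : C7 ≠ D7 := by
  intro h
  have := congrArg (fun p => coeff p 0) h
  simp only [C7, D7, coeff_add, coeff_C_mul, coeff_X_pow, coeff_C] at this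
  norm_num at this
  exact (by decide : (5 : ZMod 7) ≠ 6) this

lemma Fz_map : Fz.map (Int.castRingHom (ZMod 7)) = C7 * D7 := by
  have key : Fz = (X ^ 4 + C 3 * X ^ 2 + C 5) * (X ^ 4 + C 6 * X ^ 2 + C 6)
      + C 7 * (C 29 * X ^ 6 - C 609 * X ^ 4 + C 2716 * X ^ 2 - C 11) := by
    simp only [Fz, map_ofNat]
    ring
  rw [key]
  simp only [Polynomial.map_add, Polynomial.map_sub, Polynomial.map_mul, Polynomial.map_pow,
    map_X, map_C]
  norm_num [C7, D7]
  simp [show (7 : ZMod 7) = 0 from by decide]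

/-- Sum-of-coefficients form for a monic polynomial of degree 2. -/
lemma monic_deg2_form {R : Type*} [CommRing R] (p : R[X]) (hm : p.Monic) (hd : p.natDegree = 2) :
    p = X ^ 2 + C (p.coeff 1) * X + C (p.coeff 0) := by
  have h2 : p.coeff 2 = 1 := by have := hm.coeff_natDegree; rwa [hd] at this
  have h := p.as_sum_range' 3 (by omega)
  rw [Finset.sum_range_succ, Finset.sum_range_succ, Finset.sum_range_succ] at h
  simp only [Finset.range_zero, Finset.sum_empty, h2, zero_add] at h
  conv_lhs => rw [h]
  simp only [← C_mul_X_pow_eq_monomial, C_1, mul_one]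
  ring

lemma monic_deg4_form {R : Type*} [CommRing R] (p : R[X]) (hm : p.Monic) (hd : p.natDegree = 4) :
    p = X ^ 4 + C (p.coeff 3) * X ^ 3 + C (p.coeff 2) * X ^ 2 + C (p.coeff 1) * X
      + C (p.coeff 0) := by
  have h4 : p.coeff 4 = 1 := by have := hm.coeff_natDegree; rwa [hd] at this
  have h := p.as_sum_range' 5 (by omega)
  rw [Finset.sum_range_succ, Finset.sum_range_succ, Finset.sum_range_succ,
    Finset.sum_range_succ, Finset.sum_range_succ] at h
  simp only [Finset.range_zero, Finset.sum_empty, h4, zero_add] at h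
  conv_lhs => rw [h]
  simp only [← C_mul_X_pow_eq_monomial, C_1, mul_one]
  ring

/-- A monic divisor of a monic polynomial of no-larger degree is equal to it. -/
lemma monic_dvd_eq {R : Type*} [CommRing R] [IsDomain R] {p q : R[X]} (hp : p.Monic)
    (hq : q.Monic) (hdvd : p ∣ q) (hdeg : q.natDegree ≤ p.natDegree) : p = q := by
  obtain ⟨c, hc⟩ := hdvd
  have hc0 : c ≠ 0 := by
    rintro rfl; rw [mul_zero] at hc; exact hq.ne_zero hc
  have hdc : q.natDegree = p.natDegree + c.natDegree := by
    rw [hc, natDegree_mul hp.ne_zero hc0]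
  have hlc : c.leadingCoeff = 1 := by
    have := hq.leadingCoeff
    rw [hc, leadingCoeff_mul, hp.leadingCoeff, one_mul] at this
    exact this
  have hcm : c.Monic := hlc
  have : c = 1 := hcm.natDegree_eq_zero.mp (by omega)
  rw [hc, this, mul_one]

lemma natDegree_pos_of_not_isUnit {K : Type*} [Field K] {u : K[X]} (hu0 : u ≠ 0)
    (hu : ¬IsUnit u) : 1 ≤ u.natDegree := by
  by_contra h
  push_neg at h
  interval_cases hn : u.natDegree
  · exact hu (by
      rw [eq_C_of_natDegree_eq_zero hn]
      exact isUnit_C.mpr (isUnit_iff_ne_zero.mpr (fun hh => hu0 (by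
        rw [eq_C_of_natDegree_eq_zero hn, hh, map_zero]))))

/-- Irreducibility criterion for monic quartics over `ZMod 7`. -/
lemma irr_quartic (P : (ZMod 7)[X]) (hm : P.Monic) (hdeg : P.natDegree = 4)
    (hroot : ∀ x : ZMod 7, P.eval x ≠ 0)
    (hquad : ∀ b c d e : ZMod 7, (X ^ 2 + C b * X + C c) * (X ^ 2 + C d * X + C e) ≠ P) :
    Irreducible P := by
  have hfac : ∀ q r : (ZMod 7)[X], q.Monic → r.Monic → q * r = P →
      q.natDegree = 1 ∨ q.natDegree = 2 → False := by
    rintro q r hq hr hqr (h1 | h2)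
    · have hq' : q = X + C (q.coeff 0) := by
        have hc1 : q.coeff 1 = 1 := by have := hq.coeff_natDegree; rwa [h1] at this
        have := eq_X_add_C_of_natDegree_le_one (le_of_eq h1)
        rwa [hc1, C_1, one_mul] at this
      apply hroot (-(q.coeff 0))
      rw [← hqr, eval_mul]
      have : q.eval (-(q.coeff 0)) = 0 := by rw [hq']; simp
      rw [this, zero_mul]
    · have hrd : r.natDegree = 2 := by
        have := hq.natDegree_mul hr
        rw [hqr, hdeg] at this
        omega
      have hqf := monic_deg2_form q hq h2
      have hrf := monic_deg2_form r hr hrd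
      exact hquad (q.coeff 1) (q.coeff 0) (r.coeff 1) (r.coeff 0)
        (by rw [← hqf, ← hrf, hqr])
  constructor
  · intro h
    have := natDegree_eq_zero_of_isUnit h
    omega
  · rintro u v rfl
    by_contra hcon
    push_neg at hcon
    obtain ⟨hu, hv⟩ := hcon
    have hu0 : u ≠ 0 := fun h => hm.ne_zero (by rw [h, zero_mul])
    have hv0 : v ≠ 0 := fun h => hm.ne_zero (by rw [h, mul_zero])
    have hdegs : u.natDegree + v.natDegree = 4 := by
      rw [← natDegree_mul hu0 hv0, hdeg]
    have hu1 := natDegree_pos_of_not_isUnit hu0 hu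
    have hv1 := natDegree_pos_of_not_isUnit hv0 hv
    have hlc : u.leadingCoeff * v.leadingCoeff = 1 := by
      rw [← leadingCoeff_mul]; exact hm
    set q := u * C (u.leadingCoeff)⁻¹ with hqdef
    set r := v * C (v.leadingCoeff)⁻¹ with hrdef
    have hqm : q.Monic := monic_mul_leadingCoeff_inv hu0
    have hrm : r.Monic := monic_mul_leadingCoeff_inv hv0
    have hqr : q * r = u * v := by
      rw [hqdef, hrdef]
      have : u * C u.leadingCoeff⁻¹ * (v * C v.leadingCoeff⁻¹)
          = u * v * C (u.leadingCoeff⁻¹ * v.leadingCoeff⁻¹) := by rw [C_mul]; ring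
      rw [this, ← mul_inv, hlc, inv_one, map_one, mul_one]
    have hqd : q.natDegree = u.natDegree := by
      rw [hqdef, natDegree_mul hu0 (by simp [leadingCoeff_ne_zero.mpr hu0]), natDegree_C, add_zero]
    have hrd : r.natDegree = v.natDegree := by
      rw [hrdef, natDegree_mul hv0 (by simp [leadingCoeff_ne_zero.mpr hv0]), natDegree_C, add_zero]
    rcases Nat.lt_or_ge u.natDegree 3 with h | h
    · exact hfac q r hqm hrm hqr (by omega)
    · exact hfac r q hrm hqm (by rw [mul_comm]; exact hqr) (by omega)

lemma C7_irr : Irreducible C7 := by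
  apply irr_quartic C7 C7_monic C7_natDegree
  · intro x
    simp only [C7, eval_add, eval_mul, eval_pow, eval_X, eval_C]
    revert x; decide
  · intro b c d e h
    have key : (X ^ 2 + C b * X + C c) * (X ^ 2 + C d * X + C e)
        = X ^ 4 + C (b + d) * X ^ 3 + C (b * d + c + e) * X ^ 2 + C (b * e + c * d) * X ^ 1
          + C (c * e) * X ^ 0 := by
      simp only [map_add, map_mul]
      ring
    rw [key, C7] at h
    have e3 := congrArg (fun p => coeff p 3) h
    have e2 := congrArg (fun p => coeff p 2) h
    have e1 := congrArg (fun p => coeff p 1) h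
    have e0 := congrArg (fun p => coeff p 0) h
    simp only [coeff_add, coeff_C_mul, coeff_X_pow, coeff_C] at e3 e2 e1 e0
    norm_num at e3 e2 e1 e0
    clear h key
    revert e3 e2 e1 e0
    revert b c d e
    decide

lemma D7_irr : Irreducible D7 := by
  apply irr_quartic D7 D7_monic D7_natDegree
  · intro x
    simp only [D7, eval_add, eval_mul, eval_pow, eval_X, eval_C]
    revert x; decide
  · intro b c d e h
    have key : (X ^ 2 + C b * X + C c) * (X ^ 2 + C d * X + C e)
        = X ^ 4 + C (b + d) * X ^ 3 + C (b * d + c + e) * X ^ 2 + C (b * e + c * d) * X ^ 1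
          + C (c * e) * X ^ 0 := by
      simp only [map_add, map_mul]
      ring
    rw [key, D7] at h
    have e3 := congrArg (fun p => coeff p 3) h
    have e2 := congrArg (fun p => coeff p 2) h
    have e1 := congrArg (fun p => coeff p 1) h
    have e0 := congrArg (fun p => coeff p 0) h
    simp only [coeff_add, coeff_C_mul, coeff_X_pow, coeff_C] at e3 e2 e1 e0
    norm_num at e3 e2 e1 e0
    clear h key
    revert e3 e2 e1 e0
    revert b c d e
    decide

/-- The ring automorphism `p(X) ↦ p(-X)` of `ℤ[X]`. -/
noncomputable def negE : ℤ[X] ≃+* ℤ[X] where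
  toFun p := p.comp (-X)
  invFun p := p.comp (-X)
  left_inv p := by show (p.comp (-X)).comp (-X) = p; rw [comp_assoc]; simp
  right_inv p := by show (p.comp (-X)).comp (-X) = p; rw [comp_assoc]; simp
  map_mul' p q := mul_comp p q (-X)
  map_add' p q := add_comp

/-- The key case: no factorization of `Fz` into two monic irreducible quartics. -/
lemma quartic_case (a b : ℤ[X]) (ha : a.Monic) (hb : b.Monic)
    (hda : a.natDegree = 4) (hdb : b.natDegree = 4)
    (hia : Irreducible a) (hib : Irreducible b) (hab : Fz = a * b) : False := by
  set a' := a.comp (-X) with ha'def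
  have hXdeg : (-X : ℤ[X]).natDegree = 1 := by
    rw [natDegree_neg, natDegree_X]
  have hda' : a'.natDegree = 4 := by
    rw [ha'def, natDegree_comp, hXdeg, hda, mul_one]
  have ha'm : a'.Monic := by
    unfold Monic
    rw [ha'def, leadingCoeff_comp (by rw [hXdeg]; omega), ha.leadingCoeff, hda, one_mul]
    rw [show (-X : ℤ[X]).leadingCoeff = -1 by rw [leadingCoeff_neg, leadingCoeff_X]]
    norm_num
  have hia' : Irreducible a' := (MulEquiv.irreducible_iff (negE : ℤ[X] ≃+* ℤ[X])).mpr hia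
  have hFz2 : Fz = a' * b.comp (-X) := by
    conv_lhs => rw [← Fz_comp_neg, hab, mul_comp]
  have hprime : Prime a' := UniqueFactorizationMonoid.irreducible_iff_prime.mp hia'
  have hdvd : a' ∣ a * b := ⟨b.comp (-X), by rw [← hab, hFz2]⟩
  -- helper to extract vanishing of odd coefficients from evenness
  have odd_coeff : ∀ p : ℤ[X], p.Monic → p.natDegree = 4 → p.comp (-X) = p →
      p.coeff 1 = 0 ∧ p.coeff 3 = 0 := by
    intro p hp hd4 heven
    have hform := monic_deg4_form p hp hd4
    have hcomp : p.comp (-X) = X ^ 4 - C (p.coeff 3) * X ^ 3 + C (p.coeff 2) * X ^ 2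
        - C (p.coeff 1) * X + C (p.coeff 0) := by
      conv_lhs => rw [hform]
      simp only [add_comp, mul_comp, pow_comp, X_comp, C_comp]
      ring
    have hEq : X ^ 4 - C (p.coeff 3) * X ^ 3 + C (p.coeff 2) * X ^ 2
        - C (p.coeff 1) * X + C (p.coeff 0)
        = X ^ 4 + C (p.coeff 3) * X ^ 3 + C (p.coeff 2) * X ^ 2 + C (p.coeff 1) * X
          + C (p.coeff 0) := by
      rw [← hcomp, heven]
      exact hform
    have hEq' : X ^ 4 - C (p.coeff 3) * X ^ 3 + C (p.coeff 2) * X ^ 2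
        - C (p.coeff 1) * X ^ 1 + C (p.coeff 0) * X ^ 0
        = X ^ 4 + C (p.coeff 3) * X ^ 3 + C (p.coeff 2) * X ^ 2 + C (p.coeff 1) * X ^ 1
          + C (p.coeff 0) * X ^ 0 := by
      have h1 := hEq
      rw [show (X ^ 4 - C (p.coeff 3) * X ^ 3 + C (p.coeff 2) * X ^ 2
        - C (p.coeff 1) * X + C (p.coeff 0) : ℤ[X])
        = X ^ 4 - C (p.coeff 3) * X ^ 3 + C (p.coeff 2) * X ^ 2
        - C (p.coeff 1) * X ^ 1 + C (p.coeff 0) * X ^ 0 by ring,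
        show (X ^ 4 + C (p.coeff 3) * X ^ 3 + C (p.coeff 2) * X ^ 2 + C (p.coeff 1) * X
        + C (p.coeff 0) : ℤ[X])
        = X ^ 4 + C (p.coeff 3) * X ^ 3 + C (p.coeff 2) * X ^ 2 + C (p.coeff 1) * X ^ 1
        + C (p.coeff 0) * X ^ 0 by ring] at h1
      exact h1
    have e3 := congrArg (fun pp => coeff pp 3) hEq'
    have e1 := congrArg (fun pp => coeff pp 1) hEq'
    simp only [coeff_add, coeff_sub, coeff_C_mul, coeff_X_pow] at e3 e1
    norm_num at e3 e1
    constructor <;> omega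
  rcases hprime.2.2 a b hdvd with h | h
  · -- a' ∣ a, so a is even, and so is b; then solve the coefficient system
    have heq : a' = a := monic_dvd_eq ha'm ha h (by omega)
    have haeven : a.comp (-X) = a := by rw [← ha'def]; exact heq
    have hbeven : b.comp (-X) = b := by
      apply mul_left_cancel₀ ha.ne_zero
      rw [← heq] at hab
      rw [heq] at hFz2
      rw [← hFz2, hab, heq]
    obtain ⟨ha1, ha3⟩ := odd_coeff a ha hda haeven
    obtain ⟨hb1, hb3⟩ := odd_coeff b hb hdb hbeven
    have haf : a = X ^ 4 + C (a.coeff 2) * X ^ 2 + C (a.coeff 0) := by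
      conv_lhs => rw [monic_deg4_form a ha hda]
      rw [ha1, ha3]
      simp
    have hbf : b = X ^ 4 + C (b.coeff 2) * X ^ 2 + C (b.coeff 0) := by
      conv_lhs => rw [monic_deg4_form b hb hdb]
      rw [hb1, hb3]
      simp
    set p := a.coeff 2
    set q := a.coeff 0
    set r := b.coeff 2
    set s := b.coeff 0
    have key : Fz = X ^ 8 + C (p + r) * X ^ 6 + C (p * r + q + s) * X ^ 4
        + C (p * s + q * r) * X ^ 2 + C (q * s) * X ^ 0 := by
      rw [hab, haf, hbf]
      simp only [map_add, map_mul]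
      ring
    have e6 := congrArg (fun pp => coeff pp 6) key
    have e2 := congrArg (fun pp => coeff pp 2) key
    have e0 := congrArg (fun pp => coeff pp 0) key
    simp only [Fz, coeff_add, coeff_sub, coeff_C_mul, coeff_X_pow, coeff_C] at e6 e2 e0
    norm_num at e6 e2 e0
    -- q * s = -47, so q = ±1 or ±47
    have hq47 : q ∣ 47 := ⟨-s, by linarith⟩
    have hqa : q.natAbs ∣ 47 := by
      have := Int.natAbs_dvd_natAbs.mpr hq47
      simpa using this
    have hq4 : q = 1 ∨ q = -1 ∨ q = 47 ∨ q = -47 := by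
      have h1 := (by norm_num : Nat.Prime 47).eq_one_or_self_of_dvd q.natAbs hqa
      rcases Int.natAbs_eq q with h2 | h2 <;> rcases h1 with h1 | h1 <;> omega
    rcases hq4 with hq | hq | hq | hq <;>
      rw [hq] at e0 e2 <;>
      [(have hs : s = -47 := by linarith); (have hs : s = 47 := by linarith);
       (have hs : s = -1 := by linarith); (have hs : s = 1 := by linarith)] <;>
      rw [hs] at e2 <;> omega
  · -- a' ∣ b, so b = a(-X) and the constant term of Fz is a square
    have heq : a' = b := monic_dvd_eq ha'm hb h (by omega)
    have hb0a : b.coeff 0 = a.coeff 0 := by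
      rw [← heq, ha'def, coeff_zero_eq_eval_zero, eval_comp]
      simp [← coeff_zero_eq_eval_zero]
    have hcontr : a.coeff 0 * b.coeff 0 = -47 := by
      rw [← mul_coeff_zero, ← hab, Fz_coeff_zero]
    rw [hb0a] at hcontr
    nlinarith [mul_self_nonneg (a.coeff 0)]

lemma main_monic (a b : ℤ[X]) (ha : a.Monic) (hb : b.Monic) (hab : Fz = a * b) :
    IsUnit a ∨ IsUnit b := by
  have hdeg : a.natDegree + b.natDegree = 8 := by
    rw [← ha.natDegree_mul hb, ← hab, Fz_natDegree]
  set f7 : ℤ →+* ZMod 7 := Int.castRingHom (ZMod 7)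
  have ham : (a.map f7).Monic := ha.map f7
  have hbm : (b.map f7).Monic := hb.map f7
  have hamd : (a.map f7).natDegree = a.natDegree := ha.natDegree_map f7
  have hbmd : (b.map f7).natDegree = b.natDegree := hb.natDegree_map f7
  have hprod : a.map f7 * b.map f7 = C7 * D7 := by
    rw [← Polynomial.map_mul, ← hab, Fz_map]
  have hCp : Prime C7 := UniqueFactorizationMonoid.irreducible_iff_prime.mp C7_irr
  have hDp : Prime D7 := UniqueFactorizationMonoid.irreducible_iff_prime.mp D7_irr
  have hCdvd : C7 ∣ a.map f7 ∨ C7 ∣ b.map f7 :=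
    hCp.2.2 _ _ ⟨D7, hprod⟩
  have hDdvd : D7 ∣ a.map f7 ∨ D7 ∣ b.map f7 :=
    hDp.2.2 _ _ ⟨C7, by rw [hprod]; ring⟩
  have hcop : IsCoprime C7 D7 := by
    rcases EuclideanDomain.dvd_or_coprime C7 D7 C7_irr with h | h
    · exact absurd (monic_dvd_eq C7_monic D7_monic h
        (by rw [C7_natDegree, D7_natDegree])) C7_ne_D7
    · exact h
  have hCDdeg : (C7 * D7).natDegree = 8 := by
    rw [C7_monic.natDegree_mul D7_monic, C7_natDegree, D7_natDegree]
  -- helper for "both divide one factor"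
  have hboth : ∀ u : ℤ[X], u.Monic → C7 ∣ u.map f7 → D7 ∣ u.map f7 → 8 ≤ u.natDegree := by
    intro u hu h1 h2
    have := natDegree_le_of_dvd (hcop.mul_dvd h1 h2) (hu.map f7).ne_zero
    rw [hCDdeg, hu.natDegree_map f7] at this
    exact this
  rcases hCdvd with hCa | hCb <;> rcases hDdvd with hDa | hDb
  · right
    have := hboth a ha hCa hDa
    exact (hb.natDegree_eq_zero.mp (by omega)) ▸ isUnit_one
  · -- mixed: a ≡ C7, b ≡ D7
    exfalso
    have hda4 : 4 ≤ a.natDegree := by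
      have := natDegree_le_of_dvd hCa ham.ne_zero
      rwa [C7_natDegree, hamd] at this
    have hdb4 : 4 ≤ b.natDegree := by
      have := natDegree_le_of_dvd hDb hbm.ne_zero
      rwa [D7_natDegree, hbmd] at this
    have hda : a.natDegree = 4 := by omega
    have hdb : b.natDegree = 4 := by omega
    have hamap : a.map f7 = C7 := (monic_dvd_eq C7_monic ham hCa
      (by rw [hamd, hda, C7_natDegree])).symm
    have hbmap : b.map f7 = D7 := (monic_dvd_eq D7_monic hbm hDb
      (by rw [hbmd, hdb, D7_natDegree])).symm
    have hia : Irreducible a := Monic.irreducible_of_irreducible_map f7 a ha (hamap ▸ C7_irr)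
    have hib : Irreducible b := Monic.irreducible_of_irreducible_map f7 b hb (hbmap ▸ D7_irr)
    exact quartic_case a b ha hb hda hdb hia hib hab
  · -- mixed: a ≡ D7, b ≡ C7
    exfalso
    have hda4 : 4 ≤ a.natDegree := by
      have := natDegree_le_of_dvd hDa ham.ne_zero
      rwa [D7_natDegree, hamd] at this
    have hdb4 : 4 ≤ b.natDegree := by
      have := natDegree_le_of_dvd hCb hbm.ne_zero
      rwa [C7_natDegree, hbmd] at this
    have hda : a.natDegree = 4 := by omega
    have hdb : b.natDegree = 4 := by omega
    have hamap : a.map f7 = D7 := (monic_dvd_eq D7_monic ham hDa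
      (by rw [hamd, hda, D7_natDegree])).symm
    have hbmap : b.map f7 = C7 := (monic_dvd_eq C7_monic hbm hCb
      (by rw [hbmd, hdb, C7_natDegree])).symm
    have hia : Irreducible a := Monic.irreducible_of_irreducible_map f7 a ha (hamap ▸ D7_irr)
    have hib : Irreducible b := Monic.irreducible_of_irreducible_map f7 b hb (hbmap ▸ C7_irr)
    exact quartic_case a b ha hb hda hdb hia hib hab
  · left
    have := hboth b hb hCb hDb
    exact (ha.natDegree_eq_zero.mp (by omega)) ▸ isUnit_one

lemma Fz_irred : Irreducible Fz := by
  constructor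
  · intro h
    have := natDegree_eq_zero_of_isUnit h
    rw [Fz_natDegree] at this
    omega
  · rintro a b hab
    have hlc : a.leadingCoeff * b.leadingCoeff = 1 := by
      rw [← leadingCoeff_mul, ← hab]
      exact Fz_monic
    rcases Int.mul_eq_one_iff_eq_one_or_neg_one.mp hlc with ⟨h1, h2⟩ | ⟨h1, h2⟩
    · exact main_monic a b h1 h2 hab
    · have ham : (-a).Monic := by
        unfold Monic
        rw [leadingCoeff_neg, h1, neg_neg]
      have hbm : (-b).Monic := by
        unfold Monic
        rw [leadingCoeff_neg, h2, neg_neg]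
      rcases main_monic (-a) (-b) ham hbm (by rw [neg_mul_neg]; exact hab) with h | h
      · exact Or.inl (by simpa using h.neg)
      · exact Or.inr (by simpa using h.neg)

end Stmt18Aux

open Stmt18Aux in
/-- The degree-8 polynomial `z^8 + 212 z^6 - 4234 z^4 + 19060 z^2 - 47` is
irreducible over `ℚ`. -/
theorem stmt18 :
    Irreducible (X ^ 8 + 212 * X ^ 6 - 4234 * X ^ 4 + 19060 * X ^ 2 - 47 : ℚ[X]) := by
  have h := (Fz_monic.irreducible_iff_irreducible_map_fraction_map (K := ℚ)).mp Fz_irred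
  have hmap : Fz.map (algebraMap ℤ ℚ)
      = (X ^ 8 + 212 * X ^ 6 - 4234 * X ^ 4 + 19060 * X ^ 2 - 47 : ℚ[X]) := by
    simp only [Fz, Polynomial.map_add, Polynomial.map_sub, Polynomial.map_mul,
      Polynomial.map_pow, map_X, map_C]
    norm_num
    simp only [map_ofNat]
  rwa [hmap] at h
end
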